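/- arXiv:1307.7820 — 2 statements merged into one kernel-verified Lean document; each statement's English description precedes it below -/
import Mathlib

section
/- The Nussinov DP table D(i,j) equals M(i,j), the maximum cardinality of a non-crossing matching of complementary pairs on positions i..j. -/
/-- `P` is a non-crossing matching of complementary pairs on positions `i..j`. -/
def IsNCMatching (good : ℕ → ℕ → Prop) (i j : ℕ) (P : Finset (ℕ × ℕ)) : Prop :=
  (∀ p ∈ P, i ≤ p.1 ∧ p.1 < p.2 ∧ p.2 ≤ j ∧ good p.1 p.2) ∧
  (∀ p ∈ P, ∀ q ∈ P, p ≠ q → p.1 ≠ q.1 ∧ p.1 ≠ q.2 ∧ p.2 ≠ q.1 ∧ p.2 ≠ q.2) ∧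
  (∀ p ∈ P, ∀ q ∈ P, p.1 < q.1 → (q.2 < p.2 ∨ p.2 < q.1))

/-- The maximum cardinality of a non-crossing matching of complementary pairs on `i..j`. -/
noncomputable def M (good : ℕ → ℕ → Prop) (i j : ℕ) : ℕ :=
  sSup {m | ∃ P : Finset (ℕ × ℕ), IsNCMatching good i j P ∧ P.card = m}

section Helpers

variable (good : ℕ → ℕ → Prop)

lemma ncm_empty (i j : ℕ) : IsNCMatching good i j ∅ := by
  refine ⟨?_, ?_, ?_⟩ <;> intro p hp <;> simp at hp

lemma ncm_mono {i j i' j' : ℕ} {P : Finset (ℕ × ℕ)} (h : IsNCMatching good i' j' P)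
    (hi : i ≤ i') (hj : j' ≤ j) : IsNCMatching good i j P := by
  obtain ⟨h1, h2, h3⟩ := h
  exact ⟨fun p hp => ⟨hi.trans (h1 p hp).1, (h1 p hp).2.1,
    (h1 p hp).2.2.1.trans hj, (h1 p hp).2.2.2⟩, h2, h3⟩

lemma ncm_card_le {i j : ℕ} {P : Finset (ℕ × ℕ)} (h : IsNCMatching good i j P) :
    P.card ≤ j + 1 := by
  have hle := Finset.card_le_card_of_injOn (f := Prod.fst) (t := Finset.range (j+1))
    (fun p hp => Finset.mem_range.mpr (by have := h.1 p hp; omega))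
    (fun p hp q hq hpq => by
      by_contra hne
      exact (h.2.1 p (Finset.mem_coe.mp hp) q (Finset.mem_coe.mp hq) hne).1 hpq)
  simpa using hle

lemma ncm_bdd (i j : ℕ) : BddAbove {m | ∃ P, IsNCMatching good i j P ∧ P.card = m} :=
  ⟨j+1, fun m ⟨P, hP, hc⟩ => hc ▸ ncm_card_le good hP⟩

lemma ncm_card_le_M {i j : ℕ} {P : Finset (ℕ × ℕ)} (h : IsNCMatching good i j P) :
    P.card ≤ M good i j :=
  le_csSup (ncm_bdd good i j) ⟨P, h, rfl⟩

lemma ncm_exists_max (i j : ℕ) :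
    ∃ P : Finset (ℕ × ℕ), IsNCMatching good i j P ∧ P.card = M good i j := by
  have h0 : (0 : ℕ) ∈ {m | ∃ P : Finset (ℕ × ℕ), IsNCMatching good i j P ∧ P.card = m} :=
    ⟨∅, ncm_empty good i j, Finset.card_empty⟩
  exact Nat.sSup_mem ⟨0, h0⟩ (ncm_bdd good i j)

lemma ncm_M_zero {i j : ℕ} (h : j ≤ i) : M good i j = 0 := by
  obtain ⟨P, hP, hc⟩ := ncm_exists_max good i j
  have hPe : P = ∅ := Finset.eq_empty_of_forall_notMem (fun p hp => by
    have := hP.1 p hp; omega)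
  rw [← hc, hPe, Finset.card_empty]

lemma ncm_union {i k j : ℕ} {P1 P2 : Finset (ℕ × ℕ)} (hik : i ≤ k) (hk : 1 ≤ k)
    (hkj : k ≤ j + 1)
    (h1 : IsNCMatching good i (k-1) P1) (h2 : IsNCMatching good k j P2) :
    IsNCMatching good i j (P1 ∪ P2) ∧ (P1 ∪ P2).card = P1.card + P2.card := by
  have key1 : ∀ p ∈ P1, i ≤ p.1 ∧ p.1 < p.2 ∧ p.2 ≤ k - 1 := fun p hp =>
    ⟨(h1.1 p hp).1, (h1.1 p hp).2.1, (h1.1 p hp).2.2.1⟩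
  have key2 : ∀ p ∈ P2, k ≤ p.1 ∧ p.1 < p.2 ∧ p.2 ≤ j := fun p hp =>
    ⟨(h2.1 p hp).1, (h2.1 p hp).2.1, (h2.1 p hp).2.2.1⟩
  have hdisj : Disjoint P1 P2 := by
    rw [Finset.disjoint_left]
    intro p hp1 hp2
    have := key1 p hp1
    have := key2 p hp2
    omega
  refine ⟨⟨?_, ?_, ?_⟩, Finset.card_union_of_disjoint hdisj⟩
  · intro p hp
    rcases Finset.mem_union.mp hp with hp | hp
    · have := key1 p hp
      exact ⟨by omega, by omega, by omega, (h1.1 p hp).2.2.2⟩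
    · have := key2 p hp
      exact ⟨by omega, by omega, by omega, (h2.1 p hp).2.2.2⟩
  · intro p hp q hq hne
    rcases Finset.mem_union.mp hp with hp | hp <;>
      rcases Finset.mem_union.mp hq with hq | hq
    · exact h1.2.1 p hp q hq hne
    · have := key1 p hp; have := key2 q hq; omega
    · have := key2 p hp; have := key1 q hq; omega
    · exact h2.2.1 p hp q hq hne
  · intro p hp q hq hlt
    rcases Finset.mem_union.mp hp with hp | hp <;>
      rcases Finset.mem_union.mp hq with hq | hq
    · exact h1.2.2 p hp q hq hlt
    · have := key1 p hp; have := key2 q hq; omega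
    · have := key2 p hp; have := key1 q hq; omega
    · exact h2.2.2 p hp q hq hlt

lemma ncm_insert {i j : ℕ} {P : Finset (ℕ × ℕ)} (hij : i < j) (hg : good i j)
    (h : IsNCMatching good (i+1) (j-1) P) :
    IsNCMatching good i j (insert (i, j) P) ∧ (insert (i, j) P).card = P.card + 1 := by
  have key : ∀ p ∈ P, i + 1 ≤ p.1 ∧ p.1 < p.2 ∧ p.2 ≤ j - 1 := fun p hp =>
    ⟨(h.1 p hp).1, (h.1 p hp).2.1, (h.1 p hp).2.2.1⟩
  have hnm : (i, j) ∉ P := fun hmem => by have := key _ hmem; omega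
  refine ⟨⟨?_, ?_, ?_⟩, Finset.card_insert_of_notMem hnm⟩
  · intro p hp
    rcases Finset.mem_insert.mp hp with rfl | hp
    · exact ⟨le_rfl, hij, le_rfl, hg⟩
    · have := key p hp
      exact ⟨by omega, by omega, by omega, (h.1 p hp).2.2.2⟩
  · intro p hp q hq hne
    rcases Finset.mem_insert.mp hp with rfl | hp <;>
      rcases Finset.mem_insert.mp hq with hq' | hq
    · exact absurd hq'.symm hne
    · have := key q hq; simp only []; omega
    · subst hq'; have := key p hp; simp only []; omega
    · exact h.2.1 p hp q hq hne
  · intro p hp q hq hlt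
    rcases Finset.mem_insert.mp hp with rfl | hp <;>
      rcases Finset.mem_insert.mp hq with hq' | hq
    · subst hq'; omega
    · have := key q hq; left; simp only []; omega
    · subst hq'; have := key p hp; simp only [] at hlt ⊢; omega
    · exact h.2.2 p hp q hq hlt

end Helpers

/-- Correctness of the Nussinov DP: `D(i,j)` equals the maximum cardinality `M(i,j)` of a
non-crossing matching of complementary base pairs on positions `i..j`. -/
theorem nussinov_eq_max_matching {Base : Type*} (S : ℕ → Base) (comp : Base → Base → Prop)
    (hcomp : ∀ x y, comp x y → comp y x)
    (b D : ℕ → ℕ → ℕ)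
    (hb1 : ∀ i j, comp (S i) (S j) → b i j = 1)
    (hb0 : ∀ i j, ¬ comp (S i) (S j) → b i j = 0)
    (hD0 : ∀ i j, j ≤ i → D i j = 0)
    (hD : ∀ i j, i < j →
      D i j = max (b i j + D (i+1) (j-1))
        ((Finset.Icc (i+1) j).sup fun k => D i (k-1) + D k j)) :
    ∀ i j, D i j = M (fun k l => comp (S k) (S l)) i j := by
  set good : ℕ → ℕ → Prop := fun k l => comp (S k) (S l) with hgood
  suffices H : ∀ n i j, j - i ≤ n → D i j = M good i j by
    intro i j; exact H (j - i) i j le_rfl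
  intro n
  induction n with
  | zero =>
    intro i j hij
    rw [hD0 i j (by omega), ncm_M_zero good (by omega)]
  | succ n ih =>
    intro i j hij
    by_cases hji : j ≤ i
    · rw [hD0 i j hji, ncm_M_zero good hji]
    push_neg at hji
    apply le_antisymm
    · -- D i j ≤ M good i j
      rw [hD i j hji]
      apply max_le
      · -- pairing term
        have e1 : D (i+1) (j-1) = M good (i+1) (j-1) := ih _ _ (by omega)
        obtain ⟨P, hP, hc⟩ := ncm_exists_max good (i+1) (j-1)
        by_cases hc2 : comp (S i) (S j)
        · obtain ⟨hP', hcard⟩ := ncm_insert good hji hc2 hP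
          have hle := ncm_card_le_M good hP'
          rw [hb1 i j hc2]
          omega
        · rw [hb0 i j hc2]
          have hle := ncm_card_le_M good (ncm_mono good (i := i) (j := j) hP (by omega) (by omega))
          omega
      · -- split term
        apply Finset.sup_le
        intro k hk
        rw [Finset.mem_Icc] at hk
        have e2 : D i (k-1) = M good i (k-1) := ih _ _ (by omega)
        have e3 : D k j = M good k j := ih _ _ (by omega)
        obtain ⟨P1, hP1, hc1⟩ := ncm_exists_max good i (k-1)
        obtain ⟨P2, hP2, hc2⟩ := ncm_exists_max good k j
        obtain ⟨hU, hcard⟩ := ncm_union good (by omega) (by omega) (by omega) hP1 hP2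
        have hle := ncm_card_le_M good hU
        omega
    · -- M good i j ≤ D i j
      obtain ⟨P, hP, hc⟩ := ncm_exists_max good i j
      rw [← hc]
      by_cases hj : ∃ p ∈ P, p.2 = j
      · obtain ⟨p, hp, hpj⟩ := hj
        obtain ⟨hip, hplt, hpj', hgp⟩ := hP.1 p hp
        by_cases hpi : p.1 = i
        · -- p = (i, j)
          have hP' : IsNCMatching good (i+1) (j-1) (P.erase p) := by
            refine ⟨?_, ?_, ?_⟩
            · intro q hq
              have hqP := Finset.mem_of_mem_erase hq
              have hne := Finset.ne_of_mem_erase hq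
              have hb := hP.1 q hqP
              have hd := hP.2.1 q hqP p hp hne
              exact ⟨by omega, hb.2.1, by omega, hb.2.2.2⟩
            · intro q hq r hr hne
              exact hP.2.1 q (Finset.mem_of_mem_erase hq) r (Finset.mem_of_mem_erase hr) hne
            · intro q hq r hr hlt
              exact hP.2.2 q (Finset.mem_of_mem_erase hq) r (Finset.mem_of_mem_erase hr) hlt
          have hle := ncm_card_le_M good hP'
          have e1 : D (i+1) (j-1) = M good (i+1) (j-1) := ih _ _ (by omega)
          have hcard : (P.erase p).card + 1 = P.card := Finset.card_erase_add_one hp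
          have hb' : b i j = 1 := by
            apply hb1
            rw [← hpi, ← hpj]
            exact hgp
          rw [hD i j hji]
          have hfin : P.card ≤ b i j + D (i+1) (j-1) := by omega
          exact hfin.trans (le_max_left _ _)
        · -- i < p.1 : split at k = p.1
          have hpi' : i < p.1 := lt_of_le_of_ne hip (Ne.symm hpi)
          have hkj : p.1 < j := by omega
          have keyA : ∀ q ∈ P, q.1 < p.1 → q.2 < p.1 := by
            intro q hq hqk
            have hd := hP.2.2 q hq p hp hqk
            have hq2 : q.2 ≤ j := (hP.1 q hq).2.2.1
            omega
          have hP1 : IsNCMatching good i (p.1 - 1) (P.filter (fun q => q.1 < p.1)) := by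
            refine ⟨?_, ?_, ?_⟩
            · intro q hq
              rw [Finset.mem_filter] at hq
              have hb := hP.1 q hq.1
              have := keyA q hq.1 hq.2
              exact ⟨hb.1, hb.2.1, by omega, hb.2.2.2⟩
            · intro q hq r hr hne
              rw [Finset.mem_filter] at hq hr
              exact hP.2.1 q hq.1 r hr.1 hne
            · intro q hq r hr hlt
              rw [Finset.mem_filter] at hq hr
              exact hP.2.2 q hq.1 r hr.1 hlt
          have hP2 : IsNCMatching good p.1 j (P.filter (fun q => ¬ q.1 < p.1)) := by
            refine ⟨?_, ?_, ?_⟩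
            · intro q hq
              rw [Finset.mem_filter] at hq
              have hb := hP.1 q hq.1
              have := hq.2
              exact ⟨by omega, hb.2.1, hb.2.2.1, hb.2.2.2⟩
            · intro q hq r hr hne
              rw [Finset.mem_filter] at hq hr
              exact hP.2.1 q hq.1 r hr.1 hne
            · intro q hq r hr hlt
              rw [Finset.mem_filter] at hq hr
              exact hP.2.2 q hq.1 r hr.1 hlt
          have hle1 := ncm_card_le_M good hP1
          have hle2 := ncm_card_le_M good hP2
          have hcards := Finset.card_filter_add_card_filter_not
            (s := P) (p := fun q => q.1 < p.1)
          have e2 : D i (p.1 - 1) = M good i (p.1 - 1) := ih _ _ (by omega)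
          have e3 : D p.1 j = M good p.1 j := ih _ _ (by omega)
          rw [hD i j hji]
          have hsup : D i (p.1 - 1) + D p.1 j ≤
              (Finset.Icc (i+1) j).sup fun k => D i (k-1) + D k j :=
            Finset.le_sup (f := fun k => D i (k-1) + D k j)
              (Finset.mem_Icc.mpr ⟨by omega, by omega⟩)
          have hfin : P.card ≤ (Finset.Icc (i+1) j).sup fun k => D i (k-1) + D k j := by
            omega
          exact hfin.trans (le_max_right _ _)
      · -- no pair ends at j
        push_neg at hj
        have hP' : IsNCMatching good i (j-1) P := by
          refine ⟨?_, hP.2.1, hP.2.2⟩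
          intro q hq
          have hb := hP.1 q hq
          have := hj q hq
          exact ⟨hb.1, hb.2.1, by omega, hb.2.2.2⟩
        have hle := ncm_card_le_M good hP'
        have e1 : D i (j-1) = M good i (j-1) := ih _ _ (by omega)
        rw [hD i j hji]
        have hDjj : D j j = 0 := hD0 j j le_rfl
        have hsup : D i (j - 1) + D j j ≤
            (Finset.Icc (i+1) j).sup fun k => D i (k-1) + D k j :=
          Finset.le_sup (f := fun k => D i (k-1) + D k j)
            (Finset.mem_Icc.mpr ⟨by omega, le_rfl⟩)
        have hfin : P.card ≤ (Finset.Icc (i+1) j).sup fun k => D i (k-1) + D k j := by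
          omega
        exact hfin.trans (le_max_right _ _)
end

section
/- For the Nussinov DP table D, the blockwise decomposition is exact: for all i < j, D(i,j) = max( b(i,j) + D(i+1,j-1), max over the residual indices k ∈ [i+1, j] not covered by full q-blocks of (D(i,k−1)+D(k,j)), max over full blocks [l+1, l+q] ⊆ [i+1,j] of (D(i,l) + D(l+1,j) + max_{0≤p<q} (V_p^{(l)} + V̄_p^{(l)})) ), where V_p^{(l)} = D(i,l+p) − D(i,l) and V̄_p^{(l)} = D(l+1+p,j) − D(l+1,j) (integers). -/
/-- Exactness of the blockwise (Four-Russians) decomposition of the Nussinov recurrence.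
If the interval `[i+1, j]` is partitioned into full blocks `[l+1, l+q]` for `l ∈ L`
together with at most `2q` residual indices `R`, then `D(i,j)` equals the maximum of
(1) `b(i,j) + D(i+1,j-1)`, (2) the max of `D(i,k−1)+D(k,j)` over residual indices `k ∈ R`,
and (3) the max over blocks of `D(i,l) + D(l+1,j) + max_{0 ≤ p < q} (V_p + V̄_p)` where
`V_p = D(i,l+p) − D(i,l)` and `V̄_p = D(l+1+p,j) − D(l+1,j)` (computed in `ℤ`). -/
theorem nussinov_blockwise_exact (q : ℕ) (hq : 1 ≤ q) (b D : ℕ → ℕ → ℕ)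
    (hb : ∀ i j, b i j = 0 ∨ b i j = 1)
    (hD0 : ∀ i j, j ≤ i → D i j = 0)
    (hD : ∀ i j, i < j →
      D i j = max (b i j + D (i+1) (j-1))
        ((Finset.Icc (i+1) j).sup fun k => D i (k-1) + D k j)) :
    ∀ (i j : ℕ) (L R : Finset ℕ), i < j →
      (∀ l ∈ L, i ≤ l ∧ l + q ≤ j) →
      R ⊆ Finset.Icc (i+1) j →
      R.card ≤ 2 * q →
      Finset.Icc (i+1) j = R ∪ L.biUnion (fun l => Finset.Icc (l+1) (l+q)) →
      D i j = max (b i j + D (i+1) (j-1))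
        (max (R.sup fun k => D i (k-1) + D k j)
          (L.sup fun l =>
            ((D i l : ℤ) + (D (l+1) j : ℤ) +
              (Finset.range q).sup' (Finset.nonempty_range_iff.mpr (by omega))
                (fun p => ((D i (l+p) : ℤ) - (D i l : ℤ)) +
                          ((D (l+1+p) j : ℤ) - (D (l+1) j : ℤ)))).toNat)) := by
  intro i j L R hij hL hR hcard hpart
  have ne : (Finset.range q).Nonempty := Finset.nonempty_range_iff.mpr (by omega)
  rw [hD i j hij, hpart, Finset.sup_union, Finset.sup_biUnion]
  congr 1
  congr 1
  apply Finset.sup_congr rfl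
  intro l _
  have hS : (Finset.Icc (l+1) (l+q)).sup (fun k => D i (k-1) + D k j)
      = (Finset.range q).sup' ne (fun p => D i (l+p) + D (l+1+p) j) := by
    apply le_antisymm
    · apply Finset.sup_le
      intro k hk
      simp only [Finset.mem_Icc] at hk
      have hp : k - (l+1) ∈ Finset.range q := by simp; omega
      have h := Finset.le_sup' (fun p => D i (l+p) + D (l+1+p) j) hp
      have e1 : l + (k - (l+1)) = k - 1 := by omega
      have e2 : l + 1 + (k - (l+1)) = k := by omega
      simpa only [e1, e2] using h
    · apply Finset.sup'_le
      intro p hp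
      simp only [Finset.mem_range] at hp
      have hk : l+1+p ∈ Finset.Icc (l+1) (l+q) := by simp; omega
      have h := Finset.le_sup (f := fun k => D i (k-1) + D k j) hk
      simpa only [show l+1+p-1 = l+p by omega] using h
  rw [hS]
  have hadd : (D i l : ℤ) + (D (l+1) j : ℤ) +
      (Finset.range q).sup' ne
        (fun p => ((D i (l+p) : ℤ) - (D i l : ℤ)) +
                  ((D (l+1+p) j : ℤ) - (D (l+1) j : ℤ)))
      = (Finset.range q).sup' ne (fun p => ((D i (l+p) : ℤ) + (D (l+1+p) j : ℤ))) := by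
    rw [Finset.comp_sup'_eq_sup'_comp ne
      (fun z => (D i l : ℤ) + (D (l+1) j : ℤ) + z)
      (fun x y => by rcases le_total x y with h | h <;>
        simp [max_eq_right, max_eq_left, h])]
    apply Finset.sup'_congr _ rfl
    intro p _
    dsimp only [Function.comp]
    ring
  have hc : ((((Finset.range q).sup' ne fun p => D i (l+p) + D (l+1+p) j) : ℕ) : ℤ)
      = (Finset.range q).sup' ne fun p => ((D i (l+p) : ℤ) + (D (l+1+p) j : ℤ)) := by
    rw [Finset.comp_sup'_eq_sup'_comp ne (fun n : ℕ => (n : ℤ))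
      (fun x y => by simp [Nat.cast_max])]
    apply Finset.sup'_congr _ rfl
    intro p _
    simp [Function.comp]
  rw [hadd, ← hc]
  exact (Int.toNat_natCast _).symm
end
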